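/- arXiv:1606.01691 — 5 statements merged into one kernel-verified Lean document; each statement's English description precedes it below -/
import Mathlib

section
/- Let G be a group, H a subgroup of finite index, and σ an irreducible complex representation of H. Then every irreducible subrepresentation τ of the induced representation Ind_H^G σ, when restricted back to H, contains some G-conjugate of σ as a subrepresentation. -/
set_option synthInstance.maxHeartbeats 1000000
set_option maxHeartbeats 1000000

noncomputable section

open Function

variable {G : Type*} [Group G]

/-- A submodule invariant under a representation. -/
def RepInvariant {V : Type*} [AddCommGroup V] [Module ℂ V]
    (ρ : Representation ℂ G V) (U : Submodule ℂ V) : Prop :=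
  ∀ g : G, ∀ v ∈ U, ρ g v ∈ U

/-- Irreducibility of a representation. -/
def RepIrreducible {V : Type*} [AddCommGroup V] [Module ℂ V]
    (ρ : Representation ℂ G V) : Prop :=
  Nontrivial V ∧ ∀ U : Submodule ℂ V, RepInvariant ρ U → U = ⊥ ∨ U = ⊤

/-- Equivariant linear maps. -/
def IsRepHom {V W : Type*} [AddCommGroup V] [Module ℂ V] [AddCommGroup W] [Module ℂ W]
    (ρ : Representation ℂ G V) (τ : Representation ℂ G W) (f : V →ₗ[ℂ] W) : Prop :=
  ∀ g v, f (ρ g v) = τ g (f v)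

/-- There is a nonzero equivariant map. -/
def HomNonzero {V W : Type*} [AddCommGroup V] [Module ℂ V] [AddCommGroup W] [Module ℂ W]
    (ρ : Representation ℂ G V) (τ : Representation ℂ G W) : Prop :=
  ∃ f : V →ₗ[ℂ] W, IsRepHom ρ τ f ∧ f ≠ 0

/-- Isomorphism of representations. -/
def RepIso {V W : Type*} [AddCommGroup V] [Module ℂ V] [AddCommGroup W] [Module ℂ W]
    (ρ : Representation ℂ G V) (τ : Representation ℂ G W) : Prop :=
  ∃ e : V ≃ₗ[ℂ] W, ∀ g v, e (ρ g v) = τ g (e v)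

/-- The representation on an invariant submodule. -/
def SubRep {V : Type*} [AddCommGroup V] [Module ℂ V]
    (ρ : Representation ℂ G V) (U : Submodule ℂ V) (hU : RepInvariant ρ U) :
    Representation ℂ G U where
  toFun g := (ρ g).restrict (hU g)
  map_one' := by
    refine LinearMap.ext fun v => Subtype.ext ?_
    simp [LinearMap.restrict_apply]
  map_mul' a b := by
    refine LinearMap.ext fun v => Subtype.ext ?_
    simp [LinearMap.restrict_apply]

/-- The space of the induced representation: equivariant functions on `G`. -/
def IndCarrier (H : Subgroup G) {V : Type*} [AddCommGroup V] [Module ℂ V]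
    (σ : Representation ℂ H V) : Submodule ℂ (G → V) where
  carrier := {f | ∀ (h : H) (g : G), f ((h : G) * g) = σ h (f g)}
  add_mem' := fun ha hb h g => by simp [ha h g, hb h g]
  zero_mem' := fun h g => by simp
  smul_mem' := fun c a ha h g => by simp [ha h g]

/-- The induced representation `Ind_H^G σ`. -/
def Ind (H : Subgroup G) {V : Type*} [AddCommGroup V] [Module ℂ V]
    (σ : Representation ℂ H V) : Representation ℂ G (IndCarrier H σ) where
  toFun g :=
    { toFun := fun f => ⟨fun x => (f : G → V) (x * g), fun h x => by
        simpa [mul_assoc] using f.2 h (x * g)⟩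
      map_add' := fun a b => rfl
      map_smul' := fun c a => rfl }
  map_one' := by
    refine LinearMap.ext fun f => Subtype.ext (funext fun x => ?_)
    simp
  map_mul' a b := by
    refine LinearMap.ext fun f => Subtype.ext (funext fun x => ?_)
    simp [mul_assoc]

/-- The conjugate subgroup `gHg⁻¹`. -/
def ConjSubgroup (g : G) (H : Subgroup G) : Subgroup G :=
  H.map (MulAut.conj g).toMonoidHom

lemma mem_conjSubgroup {g x : G} {H : Subgroup G} :
    x ∈ ConjSubgroup g H ↔ g⁻¹ * x * g ∈ H := by
  constructor
  · rintro ⟨h, hh, rfl⟩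
    simpa [mul_assoc] using hh
  · intro hx
    exact ⟨g⁻¹ * x * g, hx, by simp [mul_assoc]⟩

/-- The conjugate representation `^gσ`, viewed on any subgroup `L` with `g⁻¹Lg ⊆ H`. -/
def ConjRepOn {V : Type*} [AddCommGroup V] [Module ℂ V] {H : Subgroup G}
    (σ : Representation ℂ H V) (g : G) (L : Subgroup G)
    (hL : ∀ x ∈ L, g⁻¹ * x * g ∈ H) : Representation ℂ L V where
  toFun x := σ ⟨g⁻¹ * (x : G) * g, hL x x.2⟩
  map_one' := by
    show σ _ = 1
    have : (⟨g⁻¹ * ((1 : L) : G) * g, hL _ (Subgroup.one_mem L)⟩ : H) = 1 := by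
      apply Subtype.ext; simp
    rw [this, map_one]
  map_mul' x y := by
    show σ _ = σ _ * σ _
    rw [← map_mul]
    congr 1
    apply Subtype.ext
    simp [mul_assoc]

/-- The space of equivariant linear maps, as a submodule of the linear maps. -/
def RepHomSubmodule {V W : Type*} [AddCommGroup V] [Module ℂ V] [AddCommGroup W] [Module ℂ W]
    (ρ : Representation ℂ G V) (τ : Representation ℂ G W) : Submodule ℂ (V →ₗ[ℂ] W) where
  carrier := {f | IsRepHom ρ τ f}
  add_mem' := by
    intro a b ha hb g v
    simp [LinearMap.add_apply, ha g v, hb g v]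
  zero_mem' := by intro g v; simp
  smul_mem' := by
    intro c a ha g v
    simp [LinearMap.smul_apply, ha g v]

/-- Two representations share a common irreducible constituent. -/
def CommonConstituent {V W : Type*} [AddCommGroup V] [Module ℂ V] [AddCommGroup W] [Module ℂ W]
    (ρ₁ : Representation ℂ G V) (ρ₂ : Representation ℂ G W) : Prop :=
  ∃ (n : ℕ) (θ : Representation ℂ G (Fin n → ℂ)),
    RepIrreducible θ ∧ HomNonzero θ ρ₁ ∧ HomNonzero θ ρ₂

/-!
Evaluation at `1` is an `H`-equivariant map from `τ` to `σ` (Frobenius reciprocity); it is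
nonzero, hence onto since `σ` is irreducible. The restriction of `τ` to `H` is semisimple. Indeed,
let `N` be the normal core of `H`. Since `N` is normal, `G` permutes the minimal `N`-invariant
subspaces of `τ`, so their sum is `G`-invariant, hence all of `τ` (Clifford); a sum of simple
objects is semisimple. As `[H : N]` is finite, averaging `N`-equivariant projections over `H / N`
then gives `H`-invariant complements (Maschke). So evaluation at `1` has an `H`-equivariant
section, which embeds `σ` itself (the conjugate by `g = 1`) into `τ`.
-/

open Submodule

section InvariantSubspaces

variable {U : Type*} [AddCommGroup U] [Module ℂ U]

def RepSemisimple (ρ : Representation ℂ G U) : Prop :=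
  ∀ K : Submodule ℂ U, RepInvariant ρ K → ∃ W, RepInvariant ρ W ∧ IsCompl K W

def invtSubspaces (ρ : Representation ℂ G U) : CompleteSublattice (Submodule ℂ U) :=
  CompleteSublattice.mk' {W | RepInvariant ρ W}
    (fun _ hs g => sSup_le fun W hW =>
      (show W ≤ W.comap (ρ g) from hs hW g).trans (comap_mono (le_sSup hW)))
    (fun _ hs g _ hv => mem_sInf.2 fun W hW => hs hW g _ (mem_sInf.1 hv W hW))

@[simp]
lemma mem_invtSubspaces {ρ : Representation ℂ G U} {W : Submodule ℂ U} :
    W ∈ invtSubspaces ρ ↔ RepInvariant ρ W :=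
  Iff.rfl

instance (ρ : Representation ℂ G U) : IsModularLattice (invtSubspaces ρ) :=
  ⟨fun y _ hxz => IsModularLattice.sup_inf_le_assoc_of_le (y : Submodule ℂ U) hxz⟩

instance [FiniteDimensional ℂ U] (ρ : Representation ℂ G U) :
    IsCompactlyGenerated (invtSubspaces ρ) :=
  CompleteLattice.isCompactlyGenerated_of_wellFoundedGT

instance [FiniteDimensional ℂ U] (ρ : Representation ℂ G U) : IsAtomic (invtSubspaces ρ) :=
  isAtomic_of_orderBot_wellFounded_lt wellFounded_lt

lemma RepSemisimple.of_complementedLattice (ρ : Representation ℂ G U)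
    [ComplementedLattice (invtSubspaces ρ)] : RepSemisimple ρ := fun K hK =>
  let ⟨W, hW⟩ := exists_isCompl (⟨K, mem_invtSubspaces.2 hK⟩ : invtSubspaces ρ)
  ⟨W, mem_invtSubspaces.1 W.2, hW.map (invtSubspaces ρ).subtype⟩

lemma comap_comap_rep (ρ : Representation ℂ G U) (g h : G) (W : Submodule ℂ U) :
    (W.comap (ρ h)).comap (ρ g) = W.comap (ρ (h * g)) := by
  rw [← comap_comp, ← Module.End.mul_eq_comp, map_mul]

lemma comap_rep_inv_comap (ρ : Representation ℂ G U) (g : G) (W : Submodule ℂ U) :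
    (W.comap (ρ g⁻¹)).comap (ρ g) = W := by
  rw [comap_comap_rep, inv_mul_cancel, map_one, Module.End.one_eq_id, comap_id]

lemma comap_rep_comap_inv (ρ : Representation ℂ G U) (g : G) (W : Submodule ℂ U) :
    (W.comap (ρ g)).comap (ρ g⁻¹) = W := by
  simpa using comap_rep_inv_comap ρ g⁻¹ W

lemma RepInvariant.comap_of_normal {ρ : Representation ℂ G U} {N : Subgroup G} [N.Normal]
    {W : Submodule ℂ U} (hW : RepInvariant (ρ.comp N.subtype) W) (g : G) :
    RepInvariant (ρ.comp N.subtype) (W.comap (ρ g)) := by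
  intro n v hv
  have hconj : ρ g (ρ n v) = ρ (g * n * g⁻¹) (ρ g v) := by
    simp only [← Module.End.mul_apply, ← map_mul, inv_mul_cancel_right]
  rw [MonoidHom.comp_apply, Subgroup.subtype_apply, mem_comap, hconj]
  exact hW ⟨_, ‹N.Normal›.conj_mem n n.2 g⟩ _ hv

def invtSubspacesComap (ρ : Representation ℂ G U) (N : Subgroup G) [N.Normal] (g : G) :
    invtSubspaces (ρ.comp N.subtype) ≃o invtSubspaces (ρ.comp N.subtype) where
  toFun W := ⟨W.1.comap (ρ g), (mem_invtSubspaces.1 W.2).comap_of_normal g⟩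
  invFun W := ⟨W.1.comap (ρ g⁻¹), (mem_invtSubspaces.1 W.2).comap_of_normal g⁻¹⟩
  left_inv W := Subtype.ext (comap_rep_comap_inv ρ g W)
  right_inv W := Subtype.ext (comap_rep_inv_comap ρ g W)
  map_rel_iff' {A B} := by
    refine ⟨fun h => ?_, fun h => comap_mono (f := ρ g) h⟩
    have := comap_mono (f := ρ g⁻¹) (show A.1.comap (ρ g) ≤ B.1.comap (ρ g) from h)
    rwa [comap_rep_comap_inv, comap_rep_comap_inv] at this

lemma sSup_atoms_le_apply {α : Type*} [CompleteLattice α] (f : α ≃o α) :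
    sSup {a : α | IsAtom a} ≤ f (sSup {a | IsAtom a}) :=
  sSup_le fun a ha => f.apply_symm_apply a ▸
    f.monotone (le_sSup ((f.isAtom_iff _).1 (by rwa [f.apply_symm_apply])))

theorem RepIrreducible.repSemisimple_comp_subtype [FiniteDimensional ℂ U]
    {ρ : Representation ℂ G U} (hρ : RepIrreducible ρ) (N : Subgroup G) [N.Normal] :
    RepSemisimple (ρ.comp N.subtype) := by
  have := hρ.1
  suffices h : sSup {a : invtSubspaces (ρ.comp N.subtype) | IsAtom a} = ⊤ by
    have := complementedLattice_of_sSup_atoms_eq_top h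
    exact .of_complementedLattice _
  set X := sSup {a : invtSubspaces (ρ.comp N.subtype) | IsAtom a}
  have hX : RepInvariant ρ X := fun g => sSup_atoms_le_apply (invtSubspacesComap ρ N g)
  have h_top : (⊤ : invtSubspaces (ρ.comp N.subtype)) ≠ ⊥ :=
    fun h => bot_ne_top (congrArg Subtype.val h).symm
  obtain ⟨a, ha, -⟩ := (eq_bot_or_exists_atom_le _).resolve_left h_top
  have haX : a ≤ X := le_sSup ha
  rcases hρ.2 X hX with hbot | htop
  · exact absurd (le_bot_iff.1 (haX.trans_eq (Subtype.ext hbot))) ha.1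
  · exact Subtype.ext htop

end InvariantSubspaces

section Averaging

variable {K U : Type*} [Group K] [AddCommGroup U] [Module ℂ U]

lemma exists_finset_commute_sum_conj {π : Representation ℂ K U} {M : Subgroup K}
    [M.FiniteIndex] {P : Module.End ℂ U} (hP : ∀ m ∈ M, Commute P (π m)) :
    ∃ s : Finset K, s.Nonempty ∧ ∀ k, Commute (∑ x ∈ s, π x * P * π x⁻¹) (π k) := by
  classical
  have := Fintype.ofFinite (K ⧸ M)
  let c : K → Module.End ℂ U := fun x => π x * P * π x⁻¹
  have hc_mul : ∀ x y, c (x * y) = π x * c y * π x⁻¹ := fun x y => by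
    simp only [c, map_mul, mul_inv_rev, mul_assoc]
  have hc_mem : ∀ m ∈ M, c m = P := fun m hm => by
    show π m * P * π m⁻¹ = P
    rw [← (hP m hm).eq, mul_assoc, ← map_mul, mul_inv_cancel, map_one, mul_one]
  have hc_coset : ∀ x y, x⁻¹ * y ∈ M → c y = c x := fun x y hxy => by
    rw [← mul_inv_cancel_left x y, hc_mul, hc_mem _ hxy]
  have hc_smul : ∀ (k : K) (q : K ⧸ M), c (k • q).out = π k * c q.out * π k⁻¹ := fun k q => by
    refine (hc_mul k q.out).symm ▸ hc_coset _ _ (QuotientGroup.eq.1 ?_)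
    rw [QuotientGroup.out_eq']
    calc ((k * q.out : K) : K ⧸ M) = k • ((q.out : K) : K ⧸ M) :=
          (MulAction.Quotient.smul_mk M k q.out).symm
      _ = k • q := by rw [QuotientGroup.out_eq']
  refine ⟨Finset.univ.image (Quotient.out : K ⧸ M → K),
    (Finset.univ_nonempty (α := K ⧸ M)).image _, fun k => ?_⟩
  rw [Finset.sum_image fun _ _ _ _ h => Quotient.out_injective h]
  have hconj : π k * (∑ q : K ⧸ M, c q.out) * π k⁻¹ = ∑ q : K ⧸ M, c q.out := by
    simp only [Finset.mul_sum, Finset.sum_mul, ← hc_smul]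
    exact Equiv.sum_comp (MulAction.toPerm k) (fun q : K ⧸ M => c q.out)
  change (∑ q : K ⧸ M, c q.out) * π k = π k * ∑ q : K ⧸ M, c q.out
  conv_lhs => rw [← hconj]
  rw [mul_assoc, ← map_mul, inv_mul_cancel, map_one, mul_one]

end Averaging

section Semisimple

variable {U V : Type*} [AddCommGroup U] [Module ℂ U] [AddCommGroup V] [Module ℂ V]

lemma exists_invariant_isCompl_of_commute {π : Representation ℂ G U} {K : Submodule ℂ U}
    {Q : Module.End ℂ U} {c : ℂ} (hc : c ≠ 0) (hQ : ∀ g, Commute Q (π g))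
    (hQK : ∀ v, Q v ∈ K) (hQ_fix : ∀ v ∈ K, Q v = c • v) :
    ∃ W, RepInvariant π W ∧ IsCompl K W := by
  let f : U →ₗ[ℂ] K := (c⁻¹ • Q).codRestrict K fun v => K.smul_mem _ (hQK v)
  have hf : ∀ x : K, f x = x := fun x => Subtype.ext <| by
    simp [f, hQ_fix x x.2, smul_smul, inv_mul_cancel₀ hc]
  refine ⟨LinearMap.ker Q, fun g v hv => ?_, ?_⟩
  · rw [LinearMap.mem_ker, ← Module.End.mul_apply, (hQ g).eq, Module.End.mul_apply,
      LinearMap.mem_ker.1 hv, map_zero]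
  · simpa [f, LinearMap.ker_codRestrict, LinearMap.ker_smul _ _ (inv_ne_zero hc)] using
      LinearMap.isCompl_of_proj hf

theorem RepSemisimple.comp_subtype_of_le {ρ : Representation ℂ G U} {N H : Subgroup G}
    (hNH : N ≤ H) [(N.subgroupOf H).FiniteIndex] (hN : RepSemisimple (ρ.comp N.subtype)) :
    RepSemisimple (ρ.comp H.subtype) := by
  intro K hK
  obtain ⟨W, hW, hKW⟩ := hN K fun n => hK ⟨n, hNH n.2⟩
  set P := K.projection W hKW
  have hP : ∀ m ∈ N.subgroupOf H, Commute P (ρ.comp H.subtype m) := fun m hm =>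
    (LinearMap.IsIdempotentElem.commute_iff (isIdempotentElem_projection hKW)).2
      ⟨by rw [range_projection]; exact hK m, by rw [ker_projection]; exact hW ⟨m, hm⟩⟩
  obtain ⟨s, hs, hQ⟩ := exists_finset_commute_sum_conj hP
  have hterm : ∀ x : H, ∀ v ∈ K, (ρ.comp H.subtype x * P * ρ.comp H.subtype x⁻¹) v = v :=
    fun x v hv => by
      rw [Module.End.mul_apply, Module.End.mul_apply,
        projection_apply_of_mem_left hKW (hK x⁻¹ v hv), ← Module.End.mul_apply, ← map_mul,
        mul_inv_cancel, map_one, Module.End.one_apply]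
  refine exists_invariant_isCompl_of_commute (c := s.card) (Nat.cast_ne_zero.2 hs.card_pos.ne')
    hQ (fun v => ?_) (fun v hv => ?_)
  · simp only [LinearMap.sum_apply, Module.End.mul_apply]
    exact K.sum_mem fun x _ => hK x _ (projection_apply_mem hKW _)
  · rw [LinearMap.sum_apply, Finset.sum_congr rfl fun x _ => hterm x v hv, Finset.sum_const,
      Nat.cast_smul_eq_nsmul]

theorem RepSemisimple.exists_rightInverse {π : Representation ℂ G U}
    {σ : Representation ℂ G V} (hπ : RepSemisimple π) {A : U →ₗ[ℂ] V} (hA : IsRepHom π σ A)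
    (hsurj : Surjective A) : ∃ s : V →ₗ[ℂ] U, IsRepHom σ π s ∧ A ∘ₗ s = LinearMap.id := by
  obtain ⟨W, hW, hKW⟩ := hπ (LinearMap.ker A) fun g v hv => by
    rw [LinearMap.mem_ker, hA, LinearMap.mem_ker.1 hv, map_zero]
  let s : V →ₗ[ℂ] U := W.subtype ∘ₗ (quotientEquivOfIsCompl _ W hKW).toLinearMap ∘ₗ
    (A.quotKerEquivOfSurjective hsurj).symm.toLinearMap
  have hs_mem : ∀ v, s v ∈ W := fun v => Submodule.coe_mem _
  have hAs : ∀ v, A (s v) = v := fun v => by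
    rw [← LinearMap.quotKerEquivOfSurjective_apply_mk A hsurj]
    simp only [s, LinearMap.comp_apply, LinearEquiv.coe_coe, subtype_apply,
      mk_quotientEquivOfIsCompl_apply, LinearEquiv.apply_symm_apply]
  have hW_inj : ∀ x ∈ W, ∀ y ∈ W, A x = A y → x = y := fun x hx y hy hxy =>
    sub_eq_zero.1 <| (disjoint_def.1 hKW.disjoint) _
      (by rw [LinearMap.mem_ker, map_sub, hxy, sub_self]) (W.sub_mem hx hy)
  refine ⟨s, fun g v => hW_inj _ (hs_mem _) _ (hW g _ (hs_mem v)) ?_, LinearMap.ext hAs⟩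
  rw [hAs, hA, hAs]

theorem RepIrreducible.surjective_of_isRepHom {π : Representation ℂ G U}
    {σ : Representation ℂ G V} (hσ : RepIrreducible σ) {A : U →ₗ[ℂ] V} (hA : IsRepHom π σ A)
    (hA0 : A ≠ 0) : Surjective A := by
  rcases hσ.2 (LinearMap.range A) (by rintro g _ ⟨u, rfl⟩; exact ⟨π g u, hA g u⟩) with h | h
  · exact absurd (LinearMap.range_eq_bot.1 h) hA0
  · exact LinearMap.range_eq_top.1 h

end Semisimple

section Induced

variable (H : Subgroup G) {V : Type*} [AddCommGroup V] [Module ℂ V] (σ : Representation ℂ H V)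

instance [H.FiniteIndex] [FiniteDimensional ℂ V] : FiniteDimensional ℂ (IndCarrier H σ) := by
  -- `f (h * y) = σ h (f y)`, so `f` is determined by its values at the representatives
  -- `q.out⁻¹` of the right cosets `H * y`
  let E : IndCarrier H σ →ₗ[ℂ] (G ⧸ H → V) :=
    { toFun := fun f q => (f : G → V) q.out⁻¹
      map_add' := fun _ _ => rfl
      map_smul' := fun _ _ => rfl }
  refine Module.Finite.of_injective E ((injective_iff_map_eq_zero E).2 fun f hf => ?_)
  refine Subtype.ext (funext fun x => ?_)
  obtain ⟨h, hh⟩ := QuotientGroup.mk_out_eq_mul H x⁻¹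
  have h0 : (f : G → V) (h⁻¹ * x) = 0 := by
    simpa [E, hh] using congrFun hf (QuotientGroup.mk x⁻¹ : G ⧸ H)
  calc (f : G → V) x = (f : G → V) (h * (h⁻¹ * x)) := by simp
    _ = 0 := by rw [f.2 h, h0, map_zero]

def indEval : IndCarrier H σ →ₗ[ℂ] V :=
  LinearMap.proj 1 ∘ₗ (IndCarrier H σ).subtype

@[simp]
lemma ind_apply (x y : G) (f : IndCarrier H σ) :
    ((Ind H σ x f : IndCarrier H σ) : G → V) y = (f : G → V) (y * x) :=
  rfl

lemma indEval_apply (f : IndCarrier H σ) : indEval H σ f = (f : G → V) 1 :=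
  rfl

lemma indEval_ind (x : G) (f : IndCarrier H σ) :
    indEval H σ (Ind H σ x f) = (f : G → V) x := by
  simp [indEval_apply]

lemma isRepHom_indEval : IsRepHom ((Ind H σ).comp H.subtype) σ (indEval H σ) := fun h f => by
  simpa [indEval_apply] using f.2 h 1

lemma indEval_comp_subtype_ne_zero {U : Submodule ℂ (IndCarrier H σ)}
    (hU : RepInvariant (Ind H σ) U) [Nontrivial U] : indEval H σ ∘ₗ U.subtype ≠ 0 := by
  intro h
  obtain ⟨u, hu⟩ := exists_ne (0 : U)
  refine hu (Subtype.ext (Subtype.ext (funext fun x => ?_)))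
  simpa [indEval_ind] using LinearMap.congr_fun h ⟨Ind H σ x u, hU x u u.2⟩

end Induced

/-- every irreducible subrepresentation τ of `Ind_H^G σ` (σ irreducible, H of
finite index), restricted back to `H`, contains some `G`-conjugate of `σ`. -/
theorem stmt0 (H : Subgroup G) [H.FiniteIndex]
    {V : Type*} [AddCommGroup V] [Module ℂ V] [FiniteDimensional ℂ V]
    (σ : Representation ℂ H V) (hσ : RepIrreducible σ)
    (U : Submodule ℂ (IndCarrier H σ)) (hU : RepInvariant (Ind H σ) U)
    (hτ : RepIrreducible (V := U) (SubRep (Ind H σ) U hU)) :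
    ∃ g : G, ∃ f : V →ₗ[ℂ] U, f ≠ 0 ∧ Function.Injective f ∧
      ∀ (h : H) (v : V),
        f (σ h v) = SubRep (Ind H σ) U hU (g * (h : G) * g⁻¹) (f v) := by
  have := hτ.1
  have := hσ.1
  let A : U →ₗ[ℂ] V := indEval H σ ∘ₗ U.subtype
  have hA : IsRepHom (V := U) ((SubRep (Ind H σ) U hU).comp H.subtype) σ A :=
    fun h u => isRepHom_indEval H σ h u
  have hτ_semisimple := (hτ.repSemisimple_comp_subtype H.normalCore).comp_subtype_of_le
    H.normalCore_le
  obtain ⟨f, hf, hAf⟩ := hτ_semisimple.exists_rightInverse hA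
    (hσ.surjective_of_isRepHom hA (indEval_comp_subtype_ne_zero H σ hU))
  have hleft : Function.LeftInverse A f := LinearMap.congr_fun hAf
  refine ⟨1, f, fun h0 => ?_, hleft.injective, fun h v => by simpa using hf h v⟩
  obtain ⟨v, hv⟩ := exists_ne (0 : V)
  exact hv (by simpa [h0] using (hleft v).symm)
end
end

section
/- Let G be a finite group, H and K subgroups, σ a complex representation of H. Then the restriction to K of the induced representation Ind_H^G σ decomposes as a direct sum over double cosets KgH of Ind_{K ∩ gHg⁻¹}^K of the restriction of the conjugate representation ^gσ (Mackey decomposition). -/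
set_option synthInstance.maxHeartbeats 1000000
set_option maxHeartbeats 1000000

noncomputable section

open Function

variable {G : Type*} [Group G]

/-- The Mackey summand datum: the conjugate representation `^sσ` of the subgroup
`K ∩ sHs⁻¹`, viewed as a subgroup of `K`. -/
def MackeyPiece (H K : Subgroup G) {V : Type*} [AddCommGroup V] [Module ℂ V]
    (σ : Representation ℂ H V) (s : G) :
    Representation ℂ ((ConjSubgroup s H ⊓ K).subgroupOf K) V :=
  (ConjRepOn σ s (ConjSubgroup s H ⊓ K)
      (fun x hx => mem_conjSubgroup.mp (Subgroup.mem_inf.mp hx).1)).comp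
    (Subgroup.subgroupOfEquivOfLe inf_le_right).toMonoidHom


/-!
Restricting `f ∈ Ind_H^G σ` to the cosets `s⁻¹K` (`s ∈ S`) gives `K`-equivariant maps
`Ind_H^G σ → Ind_{K ∩ sHs⁻¹}^K (^sσ)`. Conversely, every `x : G` can be written `x = h s⁻¹ k`
with `s ∈ S` unique, and a family `(F_s)` glues to the function `x ↦ σ h (F_s k)`, which is
well defined because two such decompositions differ by an element `k' k⁻¹ = s (h'⁻¹ h) s⁻¹` of
`K ∩ sHs⁻¹`, on which `F_s` transforms through `^sσ`.
-/

section Mackey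

variable {V : Type*} [AddCommGroup V] [Module ℂ V] (H K : Subgroup G) (σ : Representation ℂ H V)

abbrev MackeySummand (s : G) : Submodule ℂ (K → V) :=
  IndCarrier ((ConjSubgroup s H ⊓ K).subgroupOf K) (MackeyPiece H K σ s)

variable {H K σ}

lemma mackeySummand_apply_mul {s : G} (F : MackeySummand H K σ s) {l : K}
    (hl : s⁻¹ * (l : G) * s ∈ H) (k : K) :
    (F : K → V) (l * k) = σ ⟨s⁻¹ * l * s, hl⟩ ((F : K → V) k) :=
  F.2 ⟨l, Subgroup.mem_subgroupOf.mpr (Subgroup.mem_inf.mpr ⟨mem_conjSubgroup.mpr hl, l.2⟩)⟩ k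

lemma mackeySummand_map_eq_of_mul_eq {s : G} (F : MackeySummand H K σ s) {h h' : H} {k k' : K}
    (e : (h : G) * s⁻¹ * k = h' * s⁻¹ * k') :
    σ h ((F : K → V) k) = σ h' ((F : K → V) k') := by
  have hk' : (k' : G) = s * (h' : G)⁻¹ * (h * s⁻¹ * k) := by rw [e]; group
  have hl : s⁻¹ * ((k' * k⁻¹ : K) : G) * s = (h'⁻¹ * h : H) := by
    simp only [Subgroup.coe_mul, Subgroup.coe_inv, hk']
    group
  have hF := mackeySummand_apply_mul F (hl ▸ (h'⁻¹ * h).2) k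
  rw [inv_mul_cancel_right] at hF
  rw [hF, ← Module.End.mul_apply, ← map_mul]
  congr 2
  ext
  change (h : G) = h' * (s⁻¹ * ((k' * k⁻¹ : K) : G) * s)
  rw [hl]
  simp

variable (K σ)

def mackeyRes (s : G) : IndCarrier H σ →ₗ[ℂ] MackeySummand H K σ s where
  toFun f := ⟨fun k => (f : G → V) (s⁻¹ * k), fun l k => by
    have hl : s⁻¹ * ((l : K) : G) * s ∈ H :=
      mem_conjSubgroup.mp (Subgroup.mem_inf.mp (Subgroup.mem_subgroupOf.mp l.2)).1
    have hx : s⁻¹ * (((l : K) * k : K) : G) = (s⁻¹ * (l : K) * s) * (s⁻¹ * k) := by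
      push_cast; group
    change (f : G → V) _ = _
    rw [hx]
    exact f.2 ⟨_, hl⟩ (s⁻¹ * k)⟩
  map_add' _ _ := rfl
  map_smul' _ _ := rfl

variable {K σ}

lemma mackeyRes_apply (s : G) (f : IndCarrier H σ) (k : K) :
    (mackeyRes K σ s f : K → V) k = (f : G → V) (s⁻¹ * k) := rfl

lemma mackeyRes_ind (s : G) (k : K) (f : IndCarrier H σ) :
    mackeyRes K σ s (Ind H σ k f) =
      Ind ((ConjSubgroup s H ⊓ K).subgroupOf K) (MackeyPiece H K σ s) k (mackeyRes K σ s f) := by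
  ext k₁
  simp [mackeyRes_apply, Ind, mul_assoc]

variable {S : Finset G} (hS : ∀ x : G, ∃! s, s ∈ S ∧ ∃ k ∈ K, ∃ h ∈ H, x = k * s * h)
include hS

lemma exists_eq_mul_inv_mul (x : G) : ∃ d : S × H × K, x = d.2.1 * (d.1 : G)⁻¹ * d.2.2 := by
  obtain ⟨s, ⟨hs, k, hk, h, hh, e⟩, -⟩ := hS x⁻¹
  exact ⟨(⟨s, hs⟩, ⟨h, hh⟩⁻¹, ⟨k, hk⟩⁻¹), by simp [← mul_inv_rev, ← mul_assoc, ← e]⟩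

lemma eq_of_mul_inv_mul_eq {s s' : S} {h h' : H} {k k' : K}
    (e : (h : G) * (s : G)⁻¹ * k = h' * (s' : G)⁻¹ * k') : s = s' := by
  refine Subtype.ext ((hS ((h : G) * (s : G)⁻¹ * k)⁻¹).unique ?_ ?_)
  · exact ⟨s.2, _, K.inv_mem k.2, _, H.inv_mem h.2, by group⟩
  · exact ⟨s'.2, _, K.inv_mem k'.2, _, H.inv_mem h'.2, by rw [e]; group⟩

def mackeyGlueFun (F : (s : S) → MackeySummand H K σ s) (x : G) : V :=
  let d := (exists_eq_mul_inv_mul hS x).choose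
  σ d.2.1 ((F d.1 : K → V) d.2.2)

lemma mackeyGlueFun_eq (F : (s : S) → MackeySummand H K σ s) {x : G} {s : S} {h : H} {k : K}
    (hx : x = h * (s : G)⁻¹ * k) : mackeyGlueFun hS F x = σ h ((F s : K → V) k) := by
  have hd := (exists_eq_mul_inv_mul hS x).choose_spec
  set d := (exists_eq_mul_inv_mul hS x).choose
  obtain rfl : d.1 = s := eq_of_mul_inv_mul_eq hS (hd.symm.trans hx)
  exact mackeySummand_map_eq_of_mul_eq (F d.1) (hd.symm.trans hx)

variable (σ) in
def mackeyGlue : ((s : S) → MackeySummand H K σ s) →ₗ[ℂ] IndCarrier H σ where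
  toFun F := ⟨mackeyGlueFun hS F, fun h₀ x => by
    obtain ⟨⟨s, h, k⟩, hx⟩ := exists_eq_mul_inv_mul hS x
    rw [mackeyGlueFun_eq hS F hx, mackeyGlueFun_eq hS F (s := s) (h := h₀ * h) (k := k)
      (by rw [hx]; push_cast; group), map_mul, Module.End.mul_apply]⟩
  map_add' F F' := by
    ext x
    simp [mackeyGlueFun]
  map_smul' c F := by
    ext x
    simp [mackeyGlueFun]

lemma mackeyGlue_mackeyRes (f : IndCarrier H σ) :
    mackeyGlue σ hS (LinearMap.pi (fun s : S => mackeyRes K σ s) f) = f := by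
  ext x
  obtain ⟨⟨s, h, k⟩, hx⟩ := exists_eq_mul_inv_mul hS x
  change mackeyGlueFun hS _ x = _
  rw [mackeyGlueFun_eq hS _ hx, LinearMap.pi_apply, mackeyRes_apply, ← f.2, hx, mul_assoc]

lemma mackeyRes_mackeyGlue (F : (s : S) → MackeySummand H K σ s) (s : S) :
    mackeyRes K σ s (mackeyGlue σ hS F) = F s := by
  ext k
  change mackeyGlueFun hS F _ = _
  rw [mackeyGlueFun_eq hS F (s := s) (h := 1) (k := k) (by simp), map_one, Module.End.one_apply]

variable (σ) in
def mackeyEquiv : IndCarrier H σ ≃ₗ[ℂ] ((s : S) → MackeySummand H K σ s) :=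
  .ofLinearMap (LinearMap.pi fun s : S => mackeyRes K σ s) (mackeyGlue σ hS)
    (LinearMap.ext fun F => funext (mackeyRes_mackeyGlue hS F))
    (LinearMap.ext (mackeyGlue_mackeyRes hS))

end Mackey

theorem stmt2_general (H K : Subgroup G)
    {V : Type*} [AddCommGroup V] [Module ℂ V]
    (σ : Representation ℂ H V) (S : Finset G)
    (hS : ∀ x : G, ∃! s, s ∈ S ∧ ∃ k ∈ K, ∃ h ∈ H, x = k * s * h) :
    ∃ e : IndCarrier H σ ≃ₗ[ℂ]
        ((s : S) → IndCarrier ((ConjSubgroup (s : G) H ⊓ K).subgroupOf K)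
          (MackeyPiece H K σ (s : G))),
      ∀ (k : K) (v : IndCarrier H σ) (s : S),
        e ((Ind H σ) (k : G) v) s =
          (Ind ((ConjSubgroup (s : G) H ⊓ K).subgroupOf K) (MackeyPiece H K σ (s : G))) k
            (e v s) :=
  ⟨mackeyEquiv σ hS, fun k v s => mackeyRes_ind (s : G) k v⟩

/-- Mackey decomposition.  If `S` is a set of representatives for the double
cosets `K\\G/H` of a finite group `G`, then `Res_K Ind_H^G σ` is isomorphic, as a
representation of `K`, to the direct sum over `s ∈ S` of `Ind_{K ∩ sHs⁻¹}^K Res (^sσ)`. -/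
theorem stmt2 [Fintype G] (H K : Subgroup G)
    {V : Type*} [AddCommGroup V] [Module ℂ V] [FiniteDimensional ℂ V]
    (σ : Representation ℂ H V) (S : Finset G)
    (hS : ∀ x : G, ∃! s, s ∈ S ∧ ∃ k ∈ K, ∃ h ∈ H, x = k * s * h) :
    ∃ e : IndCarrier H σ ≃ₗ[ℂ]
        ((s : S) → IndCarrier ((ConjSubgroup (s : G) H ⊓ K).subgroupOf K)
          (MackeyPiece H K σ (s : G))),
      ∀ (k : K) (v : IndCarrier H σ) (s : S),
        e ((Ind H σ) (k : G) v) s =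
          (Ind ((ConjSubgroup (s : G) H ⊓ K).subgroupOf K) (MackeyPiece H K σ (s : G))) k
            (e v s) :=
  stmt2_general H K σ S hS
end
end

section
/- Let G be a finite group, K a subgroup, and τ, τ' irreducible representations of K. If there exists g ∈ G with Hom_{K ∩ gKg⁻¹}(τ, ^gτ') ≠ 0 (τ and τ' intertwine in G), then Ind_K^G τ and Ind_K^G τ' share a common irreducible constituent. -/
set_option synthInstance.maxHeartbeats 1000000
set_option maxHeartbeats 1000000

noncomputable section

open Function

variable {G : Type*} [Group G]

/-!
For `φ ∈ Ind_K^G τ`, averaging `x ↦ f (φ (g x))` over `K`, i.e. `x ↦ ∑ₖ τ' k⁻¹ (f (φ (g k x)))`,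
lands in `Ind_K^G τ'` and commutes with right translation. On the function supported on `K`
with value `v` at `1`, its value at `g⁻¹` is `|K ∩ g⁻¹Kg| • f v`, because the intertwining
property turns every term into `f v`; so the map is nonzero. By Maschke, a nonzero map between
representations of a finite group over `ℂ` is injective on some irreducible subrepresentation
of its source, which is then a common constituent.
-/

section Constituents

variable {W W' : Type*} [AddCommGroup W] [Module ℂ W] [AddCommGroup W'] [Module ℂ W']

lemma RepInvariant.exists_isCompl [Finite G] {ρ : Representation ℂ G W} {N : Submodule ℂ W}
    (hN : RepInvariant ρ N) : ∃ C : Submodule ℂ W, RepInvariant ρ C ∧ IsCompl N C := by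
  obtain ⟨C, hC⟩ :=
    ComplementedLattice.exists_isCompl (⟨N, fun g _ hv => hN g _ hv⟩ : Subrepresentation ρ)
  refine ⟨C.toSubmodule, fun g _ hv => C.apply_mem_toSubmodule g hv, ?_, ?_⟩
  · exact disjoint_iff.mpr (congrArg Subrepresentation.toSubmodule hC.inf_eq_bot)
  · exact codisjoint_iff.mpr (congrArg Subrepresentation.toSubmodule hC.sup_eq_top)

lemma IsRepHom.repInvariant_ker {ρ : Representation ℂ G W} {σ : Representation ℂ G W'}
    {F : W →ₗ[ℂ] W'} (hF : IsRepHom ρ σ F) : RepInvariant ρ (LinearMap.ker F) := by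
  intro g v hv
  rw [LinearMap.mem_ker] at hv ⊢
  rw [hF, hv, map_zero]

lemma IsRepHom.comp {W'' : Type*} [AddCommGroup W''] [Module ℂ W'']
    {ρ : Representation ℂ G W} {σ : Representation ℂ G W'} {π : Representation ℂ G W''}
    {F : W' →ₗ[ℂ] W''} {E : W →ₗ[ℂ] W'} (hF : IsRepHom σ π F) (hE : IsRepHom ρ σ E) :
    IsRepHom ρ π (F ∘ₗ E) := fun g v => by
  rw [LinearMap.comp_apply, hE, hF, LinearMap.comp_apply]

lemma RepInvariant.exists_fin_model [FiniteDimensional ℂ W] {ρ : Representation ℂ G W}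
    {U : Submodule ℂ W} (hU : RepInvariant ρ U) :
    ∃ (n : ℕ) (θ : Representation ℂ G (Fin n → ℂ)) (ι : (Fin n → ℂ) →ₗ[ℂ] W),
      Injective ι ∧ IsRepHom θ ρ ι ∧ LinearMap.range ι = U := by
  let e := (Module.finBasis ℂ U).equivFun
  refine ⟨_, (MonoidHomClass.toMonoidHom (e.conjAlgEquiv ℂ)).comp (SubRep ρ U hU),
    U.subtype ∘ₗ e.symm.toLinearMap, U.injective_subtype.comp e.symm.injective,
    fun g v => by simp [SubRep], ?_⟩
  rw [LinearMap.range_comp, LinearEquiv.range, Submodule.map_top, Submodule.range_subtype]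

lemma repIrreducible_of_minimal_range {θ : Representation ℂ G W'} {ρ : Representation ℂ G W}
    {ι : W' →ₗ[ℂ] W} (hι : Injective ι) (hθι : IsRepHom θ ρ ι)
    (hmin : Minimal (fun U => U ≠ ⊥ ∧ RepInvariant ρ U) (LinearMap.range ι)) :
    RepIrreducible θ := by
  refine ⟨?_, fun U hU => ?_⟩
  · obtain ⟨v, hv⟩ : ∃ v, ι v ≠ 0 := by
      by_contra! h
      exact hmin.prop.1 (LinearMap.range_eq_bot.mpr (LinearMap.ext h))
    exact nontrivial_of_ne v 0 fun h => hv (by rw [h, map_zero])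
  have hUι : RepInvariant ρ (U.map ι) := by
    rintro g _ ⟨u, hu, rfl⟩
    exact ⟨θ g u, hU g u hu, hθι g u⟩
  by_cases hbot : U.map ι = ⊥
  · left
    exact Submodule.map_injective_of_injective hι (hbot.trans (Submodule.map_bot ι).symm)
  · right
    refine Submodule.map_injective_of_injective hι ?_
    rw [Submodule.map_top]
    exact hmin.eq_of_le ⟨hbot, hUι⟩ (LinearMap.map_le_range)

lemma HomNonzero.commonConstituent [Finite G] [FiniteDimensional ℂ W]
    {ρ : Representation ℂ G W} {σ : Representation ℂ G W'} (h : HomNonzero ρ σ) :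
    CommonConstituent ρ σ := by
  obtain ⟨F, hF, hF0⟩ := h
  obtain ⟨C, hC, hkerC⟩ := hF.repInvariant_ker.exists_isCompl
  have hC0 : C ≠ ⊥ := by
    rintro rfl
    exact hF0 (LinearMap.ker_eq_top.mp (by simpa using hkerC.sup_eq_top))
  obtain ⟨U, hUC, hUmin⟩ := exists_minimal_le_of_wellFoundedLT
    (fun U : Submodule ℂ W => U ≠ ⊥ ∧ RepInvariant ρ U) C ⟨hC0, hC⟩
  obtain ⟨n, θ, ι, hι, hθι, hrange⟩ := hUmin.prop.2.exists_fin_model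
  refine ⟨n, θ, repIrreducible_of_minimal_range hι hθι (hrange ▸ hUmin), ⟨ι, hθι, ?_⟩,
    ⟨F ∘ₗ ι, hF.comp hθι, ?_⟩⟩
  · intro hι0
    exact hUmin.prop.1 (by rw [← hrange, hι0, LinearMap.range_zero])
  · intro hFι
    have hUker : U ≤ LinearMap.ker F := hrange ▸ LinearMap.range_le_ker_iff.mpr hFι
    exact hUmin.prop.1 (disjoint_self.mp (hkerC.disjoint.mono hUker hUC))

end Constituents

section Induction

variable {H K : Subgroup G} {V V' : Type*} [AddCommGroup V] [Module ℂ V]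
  [AddCommGroup V'] [Module ℂ V']

def indAverage [Fintype K] (τ' : Representation ℂ K V') : (G → V') →ₗ[ℂ] IndCarrier K τ' where
  toFun ψ := ⟨fun x => ∑ k : K, τ' k⁻¹ (ψ (k * x)), fun h x => by
    rw [map_sum]
    refine Fintype.sum_equiv (Equiv.mulRight h) _ _ fun k => ?_
    simp [mul_assoc, ← Module.End.mul_apply, ← map_mul]⟩
  map_add' ψ χ := Subtype.ext <| funext fun x => by simp [Finset.sum_add_distrib]
  map_smul' c ψ := Subtype.ext <| funext fun x => by simp [Finset.smul_sum]

def indIntertwiner [Fintype K] (τ : Representation ℂ H V) (τ' : Representation ℂ K V') (g : G)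
    (f : V →ₗ[ℂ] V') : IndCarrier H τ →ₗ[ℂ] IndCarrier K τ' :=
  indAverage τ' ∘ₗ LinearMap.compLeft f G ∘ₗ LinearMap.funLeft ℂ V (g * ·) ∘ₗ
    (IndCarrier H τ).subtype

lemma indIntertwiner_apply [Fintype K] (τ : Representation ℂ H V) (τ' : Representation ℂ K V')
    (g : G) (f : V →ₗ[ℂ] V') (φ : IndCarrier H τ) (x : G) :
    (indIntertwiner τ τ' g f φ : G → V') x = ∑ k : K, τ' k⁻¹ (f ((φ : G → V) (g * (k * x)))) :=
  rfl

lemma isRepHom_indIntertwiner [Fintype K] (τ : Representation ℂ H V)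
    (τ' : Representation ℂ K V') (g : G) (f : V →ₗ[ℂ] V') :
    IsRepHom (Ind H τ) (Ind K τ') (indIntertwiner τ τ' g f) := fun s φ =>
  Subtype.ext <| funext fun x => by
    show ∑ k : K, τ' k⁻¹ (f ((φ : G → V) (g * (k * x) * s))) =
      ∑ k : K, τ' k⁻¹ (f ((φ : G → V) (g * (k * (x * s)))))
    simp only [mul_assoc]

open Classical in
def indDelta (τ : Representation ℂ H V) (v : V) : IndCarrier H τ :=
  ⟨fun x => if hx : x ∈ H then τ ⟨x, hx⟩ v else 0, fun h x => by
    dsimp only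
    by_cases hx : x ∈ H
    · rw [dif_pos hx, dif_pos (H.mul_mem h.2 hx), ← Module.End.mul_apply, ← map_mul]
      rfl
    · have hhx : (h : G) * x ∉ H := fun hhx => hx (by simpa using H.mul_mem (H.inv_mem h.2) hhx)
      rw [dif_neg hx, dif_neg hhx, map_zero]⟩

lemma indDelta_apply_of_mem (τ : Representation ℂ H V) (v : V) {x : G} (hx : x ∈ H) :
    (indDelta τ v : G → V) x = τ ⟨x, hx⟩ v :=
  dif_pos hx

lemma indDelta_apply_of_notMem (τ : Representation ℂ H V) (v : V) {x : G} (hx : x ∉ H) :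
    (indDelta τ v : G → V) x = 0 :=
  dif_neg hx

/-- `f ∈ Hom_{H ∩ gKg⁻¹}(τ, ^gτ')`. -/
def IsConjIntertwiner (τ : Representation ℂ H V) (τ' : Representation ℂ K V') (g : G)
    (f : V →ₗ[ℂ] V') : Prop :=
  IsRepHom (τ.comp (Subgroup.inclusion inf_le_left))
    (ConjRepOn τ' g (H ⊓ ConjSubgroup g K)
      (fun _ hx => mem_conjSubgroup.mp (Subgroup.mem_inf.mp hx).2)) f

variable {τ : Representation ℂ H V} {τ' : Representation ℂ K V'} {g : G} {f : V →ₗ[ℂ] V'}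

open Classical in
lemma indIntertwiner_indDelta_apply [Fintype K] (hf : IsConjIntertwiner τ τ' g f) (v : V) :
    (indIntertwiner τ τ' g f (indDelta τ v) : G → V') g⁻¹ =
      (Finset.univ.filter fun k : K => g * (k * g⁻¹) ∈ H).card • f v := by
  rw [indIntertwiner_apply, ← Finset.sum_const, Finset.sum_filter]
  refine Finset.sum_congr rfl fun k _ => ?_
  split_ifs with hk
  · have hconj : g * (k * g⁻¹) ∈ H ⊓ ConjSubgroup g K :=
      ⟨hk, mem_conjSubgroup.mpr (by simp [mul_assoc])⟩
    have hconjk : ConjRepOn τ' g (H ⊓ ConjSubgroup g K)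
        (fun _ hx => mem_conjSubgroup.mp (Subgroup.mem_inf.mp hx).2) ⟨_, hconj⟩ = τ' k :=
      congrArg τ' (Subtype.ext (by group))
    have hfk : f (τ ⟨_, hk⟩ v) = τ' k (f v) := (hf ⟨_, hconj⟩ v).trans (by rw [hconjk])
    rw [indDelta_apply_of_mem τ v hk, hfk, Representation.inv_self_apply]
  · rw [indDelta_apply_of_notMem τ v hk, map_zero, map_zero]

open Classical in
lemma indIntertwiner_ne_zero [Fintype K] (hf0 : f ≠ 0) (hf : IsConjIntertwiner τ τ' g f) :
    indIntertwiner τ τ' g f ≠ 0 := by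
  obtain ⟨v, hv⟩ : ∃ v, f v ≠ 0 := by
    by_contra! h
    exact hf0 (LinearMap.ext h)
  have hcard : (Finset.univ.filter fun k : K => g * (k * g⁻¹) ∈ H).card ≠ 0 :=
    Finset.card_ne_zero.mpr ⟨1, by simp⟩
  intro h0
  have hval := indIntertwiner_indDelta_apply hf v
  rw [h0, LinearMap.zero_apply, ZeroMemClass.coe_zero, Pi.zero_apply,
    ← Nat.cast_smul_eq_nsmul ℂ] at hval
  exact smul_ne_zero (Nat.cast_ne_zero.mpr hcard) hv hval.symm

end Induction

theorem stmt6_general [Finite G] (K : Subgroup G)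
    {V V' : Type*} [AddCommGroup V] [Module ℂ V] [FiniteDimensional ℂ V]
    [AddCommGroup V'] [Module ℂ V']
    (τ : Representation ℂ K V)
    (τ' : Representation ℂ K V')
    (g : G) (f : V →ₗ[ℂ] V') (hf0 : f ≠ 0)
    (hf : IsRepHom
      (τ.comp (Subgroup.inclusion (inf_le_left : K ⊓ ConjSubgroup g K ≤ K)))
      (ConjRepOn τ' g (K ⊓ ConjSubgroup g K)
        (fun x hx => mem_conjSubgroup.mp (Subgroup.mem_inf.mp hx).2)) f) :
    CommonConstituent (Ind K τ) (Ind K τ') := by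
  have : Fintype K := Fintype.ofFinite K
  exact HomNonzero.commonConstituent
    ⟨indIntertwiner τ τ' g f, isRepHom_indIntertwiner τ τ' g f, indIntertwiner_ne_zero hf0 hf⟩

/-- if two irreducible representations `τ, τ'` of `K ≤ G` intertwine in `G`
(there is `g ∈ G` and a nonzero `K ∩ gKg⁻¹`-equivariant map `τ → ^gτ'`), then `Ind_K^G τ`
and `Ind_K^G τ'` share a common irreducible constituent. -/
theorem stmt6 [Finite G] (K : Subgroup G)
    {V V' : Type*} [AddCommGroup V] [Module ℂ V] [FiniteDimensional ℂ V]
    [AddCommGroup V'] [Module ℂ V'] [FiniteDimensional ℂ V']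
    (τ : Representation ℂ K V) (hτ : RepIrreducible τ)
    (τ' : Representation ℂ K V') (hτ' : RepIrreducible τ')
    (g : G) (f : V →ₗ[ℂ] V') (hf0 : f ≠ 0)
    (hf : IsRepHom
      (τ.comp (Subgroup.inclusion (inf_le_left : K ⊓ ConjSubgroup g K ≤ K)))
      (ConjRepOn τ' g (K ⊓ ConjSubgroup g K)
        (fun x hx => mem_conjSubgroup.mp (Subgroup.mem_inf.mp hx).2)) f) :
    CommonConstituent (Ind K τ) (Ind K τ') :=
  stmt6_general K τ τ' g f hf0 hf
end
end

section
/- Let G be a finite group, K a subgroup, and τ, τ' irreducible complex representations of K such that Hom_G(Ind_K^G τ, π) ≠ 0 and Hom_G(Ind_K^G τ', π) ≠ 0 for some irreducible representation π of G. Then there exists g ∈ G such that Hom_{K ∩ gKg⁻¹}(τ, ^gτ') ≠ 0. -/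
/-! Since `π` is irreducible, the nonzero maps `Ind τ → π` and `Ind τ' → π` are onto. Averaging a
linear section of the second one over the finite group `G` makes it equivariant, and composing gives
a nonzero `G`-map `Φ : Ind τ → Ind τ'`. The translates of the functions supported on `K` span
`Ind τ`, so for some `g` the Mackey component `v ↦ Φ (single v) g⁻¹` is nonzero, and it intertwines
`τ` with `^gτ'` on `K ∩ gKg⁻¹`. -/

set_option synthInstance.maxHeartbeats 1000000
set_option maxHeartbeats 1000000

noncomputable section

open Function

variable {G : Type*} [Group G]

section Averaging

variable {X W : Type*} [AddCommGroup X] [Module ℂ X] [AddCommGroup W] [Module ℂ W]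
  {ρ : Representation ℂ G X} {π : Representation ℂ G W}

theorem IsRepHom.surjective_of_irreducible {f : X →ₗ[ℂ] W} (hf : IsRepHom ρ π f)
    (hπ : RepIrreducible π) (hf0 : f ≠ 0) : Surjective f := by
  have hinv : RepInvariant π (LinearMap.range f) := by
    rintro g _ ⟨x, rfl⟩
    exact ⟨ρ g x, hf g x⟩
  refine LinearMap.range_eq_top.mp ((hπ.2 _ hinv).resolve_left fun h => hf0 ?_)
  exact LinearMap.range_eq_bot.mp h

theorem IsRepHom.exists_rightInverse_of_surjective [Finite G] {f : X →ₗ[ℂ] W}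
    (hf : IsRepHom ρ π f) (hsurj : Surjective f) :
    ∃ s : W →ₗ[ℂ] X, IsRepHom π ρ s ∧ f ∘ₗ s = LinearMap.id := by
  have := Fintype.ofFinite G
  have : Invertible (Fintype.card G : ℂ) :=
    invertibleOfNonzero (Nat.cast_ne_zero.mpr Fintype.card_ne_zero)
  obtain ⟨s₀, hs₀⟩ := f.exists_rightInverse_of_surjective (LinearMap.range_eq_top.mpr hsurj)
  set s := Representation.averageMap (Representation.linHom π ρ) s₀
  have hs : s = ⅟(Fintype.card G : ℂ) • ∑ g : G, ρ g ∘ₗ s₀ ∘ₗ π g⁻¹ := by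
    simp [s, GroupAlgebra.average, map_sum]
  refine ⟨s, fun g w => ?_, ?_⟩
  · have hinv := Representation.averageMap_invariant (Representation.linHom π ρ) s₀
    simp only [Representation.mem_invariants, Representation.linHom_apply] at hinv
    exact ((Representation.mem_linHom_invariants_iff_isIntertwining s).mp hinv).isIntertwining g w
  · -- each averaged term is again a right inverse, since `f` is equivariant
    have hterm : ∀ (g : G) (w : W), f (ρ g (s₀ (π g⁻¹ w))) = w := fun g w => by
      rw [hf, ← LinearMap.comp_apply f s₀, hs₀, LinearMap.id_apply, ← Module.End.mul_apply,
        ← map_mul, mul_inv_cancel, map_one, Module.End.one_apply]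
    ext w
    simp [hs, hterm, Finset.card_univ, ← Nat.cast_smul_eq_nsmul ℂ]

theorem HomNonzero.of_irreducible_target [Finite G] {Y : Type*} [AddCommGroup Y] [Module ℂ Y]
    {σ : Representation ℂ G Y} (hπ : RepIrreducible π) (hρ : HomNonzero ρ π)
    (hσ : HomNonzero σ π) : HomNonzero ρ σ := by
  obtain ⟨A, hA, hA0⟩ := hρ
  obtain ⟨B, hB, hB0⟩ := hσ
  obtain ⟨s, hs, hBs⟩ := hB.exists_rightInverse_of_surjective (hB.surjective_of_irreducible hπ hB0)
  refine ⟨s ∘ₗ A, fun g x => by simp [hA g x, hs g], fun h => hA0 ?_⟩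
  rw [← LinearMap.id_comp A, ← hBs, LinearMap.comp_assoc, h, LinearMap.comp_zero]

end Averaging

namespace Ind

variable (K : Subgroup G) {V V' : Type*} [AddCommGroup V] [Module ℂ V]
  [AddCommGroup V'] [Module ℂ V'] (σ : Representation ℂ K V)

open Classical in
def single : V →ₗ[ℂ] IndCarrier K σ where
  toFun v := ⟨fun x => if hx : x ∈ K then σ ⟨x, hx⟩ v else 0, fun k x => by
    dsimp only
    by_cases hx : x ∈ K
    · rw [dif_pos (K.mul_mem k.2 hx), dif_pos hx, ← Module.End.mul_apply, ← map_mul]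
      rfl
    · rw [dif_neg (fun h => hx ((K.mul_mem_cancel_left k.2).mp h)), dif_neg hx, map_zero]⟩
  map_add' v w := by
    ext x
    by_cases hx : x ∈ K <;> simp [hx]
  map_smul' c v := by
    ext x
    by_cases hx : x ∈ K <;> simp [hx]

variable {K σ}

theorem single_apply_of_mem (v : V) {x : G} (hx : x ∈ K) :
    (single K σ v : G → V) x = σ ⟨x, hx⟩ v :=
  dif_pos hx

theorem single_apply_of_notMem (v : V) {x : G} (hx : x ∉ K) :
    (single K σ v : G → V) x = 0 :=
  dif_neg hx

theorem ind_single (k : K) (v : V) : Ind K σ k (single K σ v) = single K σ (σ k v) := by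
  ext x
  change (single K σ v : G → V) (x * k) = _
  by_cases hx : x ∈ K
  · rw [single_apply_of_mem v (K.mul_mem hx k.2), single_apply_of_mem _ hx,
      ← Module.End.mul_apply, ← map_mul]
    rfl
  · rw [single_apply_of_notMem v (fun h => hx ((K.mul_mem_cancel_right k.2).mp h)),
      single_apply_of_notMem _ hx]

open Classical in
theorem single_apply_mul_eq_ite (f : IndCarrier K σ) (h x : G) :
    (single K σ ((f : G → V) (h⁻¹ * x)) : G → V) h = if h ∈ K then (f : G → V) x else 0 := by
  split_ifs with hh
  · rw [single_apply_of_mem _ hh, ← f.2 ⟨h, hh⟩, mul_inv_cancel_left]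
  · exact single_apply_of_notMem _ hh

theorem card_smul_eq_sum_ind_single [Fintype G] (f : IndCarrier K σ) :
    (Nat.card K : ℂ) • f = ∑ g : G, Ind K σ g⁻¹ (single K σ ((f : G → V) g)) := by
  classical
  ext x
  rw [Submodule.coe_sum, Finset.sum_apply]
  change _ = ∑ g : G, (single K σ ((f : G → V) g) : G → V) (x * g⁻¹)
  -- reindex by `h = x g⁻¹`
  rw [← ((Equiv.inv G).trans (Equiv.mulRight x)).sum_comp]
  simp only [Equiv.trans_apply, Equiv.coe_mulRight, Equiv.inv_apply, mul_inv_rev, inv_inv,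
    mul_inv_cancel_left, single_apply_mul_eq_ite, Finset.sum_ite,
    Finset.sum_const, smul_zero, add_zero]
  rw [← Fintype.card_subtype, ← Nat.card_eq_fintype_card, Submodule.coe_smul, Pi.smul_apply,
    Nat.cast_smul_eq_nsmul]

theorem linearMap_eq_zero_of_ind_single [Finite G] {X : Type*} [AddCommGroup X] [Module ℂ X]
    (A : IndCarrier K σ →ₗ[ℂ] X) (hA : ∀ (g : G) (v : V), A (Ind K σ g (single K σ v)) = 0) :
    A = 0 := by
  have := Fintype.ofFinite G
  ext f
  have h := congrArg A (card_smul_eq_sum_ind_single f)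
  simp only [map_smul, map_sum, hA, Finset.sum_const_zero] at h
  exact (smul_eq_zero.mp h).resolve_left (Nat.cast_ne_zero.mpr Nat.card_pos.ne')

variable {σ' : Representation ℂ K V'}

def component (Φ : IndCarrier K σ →ₗ[ℂ] IndCarrier K σ') (g : G) : V →ₗ[ℂ] V' :=
  LinearMap.proj g⁻¹ ∘ₗ (IndCarrier K σ').subtype ∘ₗ Φ ∘ₗ single K σ

theorem component_apply (Φ : IndCarrier K σ →ₗ[ℂ] IndCarrier K σ') (g : G) (v : V) :
    component Φ g v = (Φ (single K σ v) : G → V') g⁻¹ :=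
  rfl

theorem isRepHom_component {Φ : IndCarrier K σ →ₗ[ℂ] IndCarrier K σ'}
    (hΦ : IsRepHom (Ind K σ) (Ind K σ') Φ) (g : G) :
    IsRepHom
      (σ.comp (Subgroup.inclusion (inf_le_left : K ⊓ ConjSubgroup g K ≤ K)))
      (ConjRepOn σ' g (K ⊓ ConjSubgroup g K)
        (fun _ hx => mem_conjSubgroup.mp (Subgroup.mem_inf.mp hx).2)) (component Φ g) := by
  intro x v
  have hx : g⁻¹ * x * g ∈ K := mem_conjSubgroup.mp (Subgroup.mem_inf.mp x.2).2
  change component Φ g (σ ⟨x, (Subgroup.mem_inf.mp x.2).1⟩ v) = σ' ⟨g⁻¹ * x * g, hx⟩ _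
  rw [component_apply, component_apply, ← ind_single, hΦ]
  change (Φ (single K σ v) : G → V') (g⁻¹ * x) = _
  rw [← (Φ (single K σ v)).2 ⟨_, hx⟩ g⁻¹, mul_inv_cancel_right]

theorem exists_component_ne_zero [Finite G] {Φ : IndCarrier K σ →ₗ[ℂ] IndCarrier K σ'}
    (hΦ : IsRepHom (Ind K σ) (Ind K σ') Φ) (hΦ0 : Φ ≠ 0) : ∃ g, component Φ g ≠ 0 := by
  by_contra! h
  refine hΦ0 (linearMap_eq_zero_of_ind_single Φ fun g v => ?_)
  have hv : Φ (single K σ v) = 0 := by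
    ext x
    simpa [component_apply] using LinearMap.congr_fun (h x⁻¹) v
  rw [hΦ, hv, map_zero]

theorem exists_intertwining_of_homNonzero [Finite G] (h : HomNonzero (Ind K σ) (Ind K σ')) :
    ∃ (g : G) (f : V →ₗ[ℂ] V'), f ≠ 0 ∧
      IsRepHom
        (σ.comp (Subgroup.inclusion (inf_le_left : K ⊓ ConjSubgroup g K ≤ K)))
        (ConjRepOn σ' g (K ⊓ ConjSubgroup g K)
          (fun _ hx => mem_conjSubgroup.mp (Subgroup.mem_inf.mp hx).2)) f := by
  obtain ⟨Φ, hΦ, hΦ0⟩ := h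
  obtain ⟨g, hg⟩ := exists_component_ne_zero hΦ hΦ0
  exact ⟨g, component Φ g, hg, isRepHom_component hΦ g⟩

end Ind

theorem stmt7_general [Finite G] (K : Subgroup G)
    {V V' W : Type*} [AddCommGroup V] [Module ℂ V]
    [AddCommGroup V'] [Module ℂ V']
    [AddCommGroup W] [Module ℂ W]
    (τ : Representation ℂ K V)
    (τ' : Representation ℂ K V')
    (π : Representation ℂ G W) (hπ : RepIrreducible π)
    (h1 : HomNonzero (Ind K τ) π) (h2 : HomNonzero (Ind K τ') π) :
    ∃ (g : G) (f : V →ₗ[ℂ] V'), f ≠ 0 ∧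
      IsRepHom
        (τ.comp (Subgroup.inclusion (inf_le_left : K ⊓ ConjSubgroup g K ≤ K)))
        (ConjRepOn τ' g (K ⊓ ConjSubgroup g K)
          (fun x hx => mem_conjSubgroup.mp (Subgroup.mem_inf.mp hx).2)) f :=
  Ind.exists_intertwining_of_homNonzero (HomNonzero.of_irreducible_target hπ h1 h2)

/-- two irreducible representations `τ, τ'` of `K ≤ G` which both occur in a
common irreducible representation `π` of the finite group `G` must intertwine in `G`:
there are `g ∈ G` and a nonzero `K ∩ gKg⁻¹`-equivariant map `τ → ^gτ'`. -/
theorem stmt7 [Finite G] (K : Subgroup G)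
    {V V' W : Type*} [AddCommGroup V] [Module ℂ V] [FiniteDimensional ℂ V]
    [AddCommGroup V'] [Module ℂ V'] [FiniteDimensional ℂ V']
    [AddCommGroup W] [Module ℂ W] [FiniteDimensional ℂ W]
    (τ : Representation ℂ K V) (hτ : RepIrreducible τ)
    (τ' : Representation ℂ K V') (hτ' : RepIrreducible τ')
    (π : Representation ℂ G W) (hπ : RepIrreducible π)
    (h1 : HomNonzero (Ind K τ) π) (h2 : HomNonzero (Ind K τ') π) :
    ∃ (g : G) (f : V →ₗ[ℂ] V'), f ≠ 0 ∧
      IsRepHom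
        (τ.comp (Subgroup.inclusion (inf_le_left : K ⊓ ConjSubgroup g K ≤ K)))
        (ConjRepOn τ' g (K ⊓ ConjSubgroup g K)
          (fun x hx => mem_conjSubgroup.mp (Subgroup.mem_inf.mp hx).2)) f :=
  stmt7_general K τ τ' π hπ h1 h2
end
end

section
/- Let G be a finite group, N ◁ G with G/N abelian, and σ an irreducible representation of N. If τ and τ' are two irreducible subrepresentations of Ind_N^G σ, then τ' ≅ τ ⊗ χ for some character χ of G/N (inflated to G). -/
set_option synthInstance.maxHeartbeats 1000000
set_option maxHeartbeats 1000000

noncomputable section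

open Function

variable {G : Type*} [Group G]

/-!
Evaluation at `1` is a nonzero `N`-map from any nonzero `G`-stable subspace of `Ind_N^G σ` to `σ`;
for `τ'` it is onto since `σ` is irreducible, and averaging over `N` splits it. Composing gives a
nonzero element of `Hom_N(τ, τ')`. On this space `G` acts by conjugation with `N` acting
trivially, so `G/N` abelian gives commuting operators and hence a common eigenvector `f` with
`g • f = χ g • f`. Such an `f` intertwines `τ` with `τ' ⊗ χ⁻¹`, so it is an isomorphism by
Schur's lemma.
-/

section Schur

variable {A B : Type*} [AddCommGroup A] [Module ℂ A] [AddCommGroup B] [Module ℂ B]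
  {ρ : Representation ℂ G A} {π : Representation ℂ G B}

theorem RepIrreducible.ker_eq_bot (hρ : RepIrreducible ρ) {f : A →ₗ[ℂ] B}
    (hf : RepInvariant ρ (LinearMap.ker f)) (hf0 : f ≠ 0) : LinearMap.ker f = ⊥ :=
  (hρ.2 _ hf).resolve_right fun h => hf0 (LinearMap.ker_eq_top.mp h)

theorem RepIrreducible.range_eq_top {M : Type*} [AddCommMonoid M] [Module ℂ M]
    (hπ : RepIrreducible π) {f : M →ₗ[ℂ] B}
    (hf : RepInvariant π (LinearMap.range f)) (hf0 : f ≠ 0) : LinearMap.range f = ⊤ :=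
  (hπ.2 _ hf).resolve_left fun h => hf0 (LinearMap.range_eq_bot.mp h)

theorem RepIrreducible.bijective_of_twisted (hρ : RepIrreducible ρ) (hπ : RepIrreducible π)
    (χ : G →* ℂˣ) {f : A →ₗ[ℂ] B} (hf : ∀ g v, f (ρ g v) = (χ g : ℂ) • π g (f v))
    (hf0 : f ≠ 0) : Bijective f := by
  refine ⟨LinearMap.ker_eq_bot.mp (hρ.ker_eq_bot ?_ hf0),
    LinearMap.range_eq_top.mp (hπ.range_eq_top ?_ hf0)⟩
  · intro g v hv
    rw [LinearMap.mem_ker] at hv ⊢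
    rw [hf, hv, map_zero, smul_zero]
  · rintro g _ ⟨v, rfl⟩
    have : π g (f v) = ((χ g)⁻¹ : ℂˣ) • f (ρ g v) := by
      rw [hf, Units.smul_def, smul_smul, ← Units.val_mul, inv_mul_cancel, Units.val_one, one_smul]
    rw [this]
    exact Submodule.smul_mem _ _ (LinearMap.mem_range_self f _)

end Schur

section CommonEigenvector

variable {W : Type*} [AddCommGroup W] [Module ℂ W] [FiniteDimensional ℂ W]

theorem exists_minimal_repInvariant [Nontrivial W] (ρ : Representation ℂ G W) :
    ∃ M : Submodule ℂ W, RepInvariant ρ M ∧ M ≠ ⊥ ∧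
      ∀ M' : Submodule ℂ W, RepInvariant ρ M' → M' ≠ ⊥ → ¬M' < M := by
  obtain ⟨M, ⟨hM, hM0⟩, hmin⟩ := IsArtinian.set_has_minimal
    {M : Submodule ℂ W | RepInvariant ρ M ∧ M ≠ ⊥} ⟨⊤, fun _ _ _ => trivial, top_ne_bot⟩
  exact ⟨M, hM, hM0, fun M' hM' hM'0 => hmin M' ⟨hM', hM'0⟩⟩

theorem exists_smul_on_minimal_repInvariant (ρ : Representation ℂ G W)
    (hρ : ∀ g h, Commute (ρ g) (ρ h)) {M : Submodule ℂ W} (hM : RepInvariant ρ M) (hM0 : M ≠ ⊥)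
    (hmin : ∀ M' : Submodule ℂ W, RepInvariant ρ M' → M' ≠ ⊥ → ¬M' < M) (g : G) :
    ∃ c : ℂ, ∀ w ∈ M, ρ g w = c • w := by
  have : Nontrivial M := Submodule.nontrivial_iff_ne_bot.mpr hM0
  obtain ⟨c, hc⟩ := Module.End.exists_eigenvalue ((ρ g).restrict (hM g))
  obtain ⟨v, hv, hv0⟩ := hc.exists_hasEigenvector
  set E := M ⊓ Module.End.eigenspace (ρ g) c
  have hE : RepInvariant ρ E := by
    rintro h w ⟨hwM, hw⟩
    refine ⟨hM h w hwM, ?_⟩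
    rw [SetLike.mem_coe, Module.End.mem_eigenspace_iff] at hw ⊢
    rw [← Module.End.mul_apply, (hρ g h).eq, Module.End.mul_apply, hw, map_smul]
  have hE0 : E ≠ ⊥ := by
    refine (Submodule.ne_bot_iff E).mpr ⟨v, ⟨v.2, ?_⟩, fun h => hv0 (Subtype.ext h)⟩
    show (v : W) ∈ Module.End.eigenspace (ρ g) c
    rw [Module.End.mem_eigenspace_iff] at hv ⊢
    exact congrArg Subtype.val hv
  have hEM : E = M := eq_of_le_of_not_lt inf_le_left (hmin E hE hE0)
  exact ⟨c, fun w hw => Module.End.mem_eigenspace_iff.mp (hEM ▸ hw : w ∈ E).2⟩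

theorem exists_common_eigenvector [Nontrivial W] (ρ : Representation ℂ G W)
    (hρ : ∀ g h, Commute (ρ g) (ρ h)) :
    ∃ χ : G →* ℂˣ, ∃ w : W, w ≠ 0 ∧ ∀ g, ρ g w = (χ g : ℂ) • w := by
  obtain ⟨M, hM, hM0, hmin⟩ := exists_minimal_repInvariant ρ
  obtain ⟨w, hwM, hw0⟩ := Submodule.exists_mem_ne_zero_of_ne_bot hM0
  choose c hc using exists_smul_on_minimal_repInvariant ρ hρ hM hM0 hmin
  have hcw (g : G) : ρ g w = c g • w := hc g w hwM
  have hc_inj : Injective fun a : ℂ => a • w := smul_left_injective ℂ hw0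
  let χ : G →* ℂ :=
    { toFun := c
      map_one' := hc_inj (by simp only [← hcw, map_one, Module.End.one_apply, one_smul])
      map_mul' := fun g h => hc_inj (by
        dsimp only
        rw [← hcw, map_mul, Module.End.mul_apply, hcw, map_smul, hcw, smul_smul, mul_comm]) }
  exact ⟨χ.toHomUnits, w, hw0, hcw⟩

end CommonEigenvector

section RestrictedHoms

theorem Representation.commute_of_forall_mem_eq_one {W : Type*} [AddCommGroup W] [Module ℂ W]
    {N : Subgroup G} (hab : ∀ x y : G, x * y * x⁻¹ * y⁻¹ ∈ N) (ρ : Representation ℂ G W)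
    (hρ : ∀ n ∈ N, ρ n = 1) (g h : G) : Commute (ρ g) (ρ h) := by
  have hn : (h * g)⁻¹ * (g * h) ∈ N := by simpa [mul_assoc] using hab g⁻¹ h⁻¹
  calc ρ g * ρ h = ρ (h * g * ((h * g)⁻¹ * (g * h))) := by rw [mul_inv_cancel_left, map_mul]
    _ = ρ h * ρ g := by rw [map_mul, hρ _ hn, mul_one, map_mul]

variable {A B : Type*} [AddCommGroup A] [Module ℂ A] [AddCommGroup B] [Module ℂ B]

abbrev restrictedRepHoms (N : Subgroup G) (ρ : Representation ℂ G A)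
    (π : Representation ℂ G B) : Submodule ℂ (A →ₗ[ℂ] B) :=
  RepHomSubmodule (ρ.comp N.subtype) (π.comp N.subtype)

variable {N : Subgroup G} (ρ : Representation ℂ G A) (π : Representation ℂ G B)

theorem repInvariant_linHom_restrictedRepHoms [N.Normal] :
    RepInvariant (ρ.linHom π) (restrictedRepHoms N ρ π) := by
  intro g f hf n v
  have hn : g⁻¹ * n * g ∈ N := by simpa using Subgroup.Normal.conj_mem inferInstance _ n.2 g⁻¹
  have key := hf ⟨_, hn⟩ (ρ g⁻¹ v)
  simp only [MonoidHom.comp_apply, Subgroup.coe_subtype] at key ⊢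
  simp only [Representation.linHom_apply, LinearMap.comp_apply]
  have hρ : ρ g⁻¹ (ρ n v) = ρ (g⁻¹ * n * g) (ρ g⁻¹ v) := by
    simp only [← Module.End.mul_apply, ← map_mul, mul_assoc, mul_inv_cancel, mul_one]
  rw [hρ, key]
  simp only [← Module.End.mul_apply, ← map_mul, ← mul_assoc, mul_inv_cancel, one_mul]

theorem linHom_apply_of_mem_restrictedRepHoms {f : A →ₗ[ℂ] B}
    (hf : f ∈ restrictedRepHoms N ρ π) {n : G} (hn : n ∈ N) : ρ.linHom π n f = f := by
  ext v
  have key := hf ⟨n, hn⟩ (ρ n⁻¹ v)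
  simp only [MonoidHom.comp_apply, Subgroup.coe_subtype] at key
  rw [Representation.linHom_apply, LinearMap.comp_apply, LinearMap.comp_apply, ← key,
    ← Module.End.mul_apply, ← map_mul, mul_inv_cancel, map_one, Module.End.one_apply]

variable {ρ π} [FiniteDimensional ℂ A] [FiniteDimensional ℂ B]

theorem exists_twisted_linearEquiv_of_mem_restrictedRepHoms [N.Normal]
    (hab : ∀ x y : G, x * y * x⁻¹ * y⁻¹ ∈ N) (hρ : RepIrreducible ρ) (hπ : RepIrreducible π)
    {F : A →ₗ[ℂ] B} (hF : F ∈ restrictedRepHoms N ρ π) (hF0 : F ≠ 0) :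
    ∃ χ : G →* ℂˣ, (∀ n ∈ N, χ n = 1) ∧
      ∃ e : A ≃ₗ[ℂ] B, ∀ g v, e (ρ g v) = (χ g : ℂ) • π g (e v) := by
  set θ := SubRep (ρ.linHom π) _ (repInvariant_linHom_restrictedRepHoms (N := N) ρ π)
  have hθN (n : G) (hn : n ∈ N) : θ n = 1 :=
    LinearMap.ext fun f => Subtype.ext (linHom_apply_of_mem_restrictedRepHoms ρ π f.2 hn)
  have : Nontrivial (restrictedRepHoms N ρ π) :=
    nontrivial_of_ne ⟨F, hF⟩ 0 fun h => hF0 congr($h.1)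
  obtain ⟨χ, f, hf0, hf⟩ :=
    exists_common_eigenvector θ (θ.commute_of_forall_mem_eq_one hab hθN)
  have hχN (n : G) (hn : n ∈ N) : χ n = 1 := by
    have h := hf n
    rw [hθN n hn, Module.End.one_apply] at h
    exact Units.val_eq_one.mp (smul_left_injective ℂ hf0 (h.symm.trans (one_smul ℂ f).symm))
  have hf' (g : G) (v : A) : f.1 (ρ g v) = ((χ⁻¹ g : ℂˣ) : ℂ) • π g (f.1 v) := by
    have h : π g (f.1 (ρ g⁻¹ (ρ g v))) = (χ g : ℂ) • f.1 (ρ g v) :=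
      congr($(hf g).1 (ρ g v))
    rw [← Module.End.mul_apply, ← map_mul, inv_mul_cancel, map_one, Module.End.one_apply] at h
    rw [h, MonoidHom.inv_apply, smul_smul, ← Units.val_mul, inv_mul_cancel, Units.val_one,
      one_smul]
  have hf0' : f.1 ≠ 0 := fun h => hf0 (Subtype.ext h)
  refine ⟨χ⁻¹, fun n hn => by rw [MonoidHom.inv_apply, hχN n hn, inv_one],
    LinearEquiv.ofBijective f.1 (hρ.bijective_of_twisted hπ χ⁻¹ hf' hf0'), hf'⟩

end RestrictedHoms

theorem exists_isRepHom_rightInverse {H : Type*} [Group H] [Finite H]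
    {V B : Type*} [AddCommGroup V] [Module ℂ V] [AddCommGroup B] [Module ℂ B]
    {ρ : Representation ℂ H V} {π : Representation ℂ H B} {p : B →ₗ[ℂ] V}
    (hp : IsRepHom π ρ p) (hsurj : Surjective p) :
    ∃ j : V →ₗ[ℂ] B, p ∘ₗ j = LinearMap.id ∧ IsRepHom ρ π j := by
  cases nonempty_fintype H
  have : Invertible (Fintype.card H : ℂ) := invertibleOfNonzero (by simp)
  obtain ⟨s, hs⟩ := p.exists_rightInverse_of_surjective (LinearMap.range_eq_top.mpr hsurj)
  refine ⟨(ρ.linHom π).averageMap s, ?_, fun h v => ?_⟩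
  · have hid : LinearMap.id ∈ (ρ.linHom ρ).invariants := fun h => by
      ext v
      simp [Representation.linHom_apply, ← Module.End.mul_apply, ← map_mul]
    have hcomm : p ∘ₗ (ρ.linHom π).averageMap s = (ρ.linHom ρ).averageMap (p ∘ₗ s) := by
      ext v
      simp [GroupAlgebra.average, map_sum, Representation.linHom_apply, hp _ _]
    rw [hcomm, hs, Representation.averageMap_id _ _ hid]
  · have := (Representation.mem_linHom_invariants_iff_isIntertwining _).mp
      ((ρ.linHom π).averageMap_invariant s)
    exact this.isIntertwining h v

section Induced

variable {H : Subgroup G} {V : Type*} [AddCommGroup V] [Module ℂ V] (σ : Representation ℂ H V)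

def indEvalOne : IndCarrier H σ →ₗ[ℂ] V where
  toFun f := (f : G → V) 1
  map_add' _ _ := rfl
  map_smul' _ _ := rfl

theorem indEvalOne_Ind (g : G) (f : IndCarrier H σ) :
    indEvalOne σ (Ind H σ g f) = (f : G → V) g :=
  congrArg f.1 (one_mul g)

theorem isRepHom_indEvalOne_domRestrict {U : Submodule ℂ (IndCarrier H σ)}
    (hU : RepInvariant (Ind H σ) U) :
    IsRepHom (V := U) ((SubRep (Ind H σ) U hU).comp H.subtype) σ
      ((indEvalOne σ).domRestrict U) := by
  intro h u
  change indEvalOne σ (Ind H σ h u) = σ h ((u : G → V) 1)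
  rw [indEvalOne_Ind, ← u.1.2 h 1, mul_one]

theorem indEvalOne_domRestrict_ne_zero {U : Submodule ℂ (IndCarrier H σ)}
    (hU : RepInvariant (Ind H σ) U) (hU0 : U ≠ ⊥) : (indEvalOne σ).domRestrict U ≠ 0 := by
  obtain ⟨f, hfU, hf0⟩ := Submodule.exists_mem_ne_zero_of_ne_bot hU0
  obtain ⟨g, hg⟩ : ∃ g, (f : G → V) g ≠ 0 := Function.ne_iff.mp fun h => hf0 (Subtype.ext h)
  intro h
  exact hg (by simpa [indEvalOne_Ind] using congr($h ⟨_, hU g f hfU⟩))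

end Induced

/-- let `N ◁ G` with `G/N` abelian and `σ` an irreducible representation of
`N`.  Any two irreducible subrepresentations `τ, τ'` of `Ind_N^G σ` differ by a twist by a
character of `G` trivial on `N`:  `τ' ≅ τ ⊗ χ`. -/
theorem stmt8 [Finite G] (N : Subgroup G) [N.Normal]
    (hab : ∀ x y : G, x * y * x⁻¹ * y⁻¹ ∈ N)
    {V : Type*} [AddCommGroup V] [Module ℂ V] [FiniteDimensional ℂ V]
    (σ : Representation ℂ N V) (hσ : RepIrreducible σ)
    (U U' : Submodule ℂ (IndCarrier N σ))
    (hU : RepInvariant (Ind N σ) U) (hU' : RepInvariant (Ind N σ) U')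
    (hτ : RepIrreducible (V := U) (SubRep (Ind N σ) U hU))
    (hτ' : RepIrreducible (V := U') (SubRep (Ind N σ) U' hU')) :
    ∃ χ : G →* ℂˣ, (∀ n ∈ N, χ n = 1) ∧
      ∃ e : U ≃ₗ[ℂ] U', ∀ (g : G) (v : U),
        e (SubRep (Ind N σ) U hU g v) = (χ g : ℂ) • SubRep (Ind N σ) U' hU' g (e v) := by
  set p := (indEvalOne σ).domRestrict U
  set p' := (indEvalOne σ).domRestrict U'
  have hp := isRepHom_indEvalOne_domRestrict σ hU
  have hp' := isRepHom_indEvalOne_domRestrict σ hU'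
  have hp0 : p ≠ 0 :=
    indEvalOne_domRestrict_ne_zero σ hU (Submodule.nontrivial_iff_ne_bot.mp hτ.1)
  have hp'0 : p' ≠ 0 :=
    indEvalOne_domRestrict_ne_zero σ hU' (Submodule.nontrivial_iff_ne_bot.mp hτ'.1)
  have hp'_range : RepInvariant σ (LinearMap.range p') := by
    rintro n _ ⟨u, rfl⟩
    exact ⟨_, hp' n u⟩
  have hp'_surj : Surjective p' := LinearMap.range_eq_top.mp (hσ.range_eq_top hp'_range hp'0)
  obtain ⟨j, hjp', hj⟩ := exists_isRepHom_rightInverse hp' hp'_surj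
  have hjp0 : j ∘ₗ p ≠ 0 := fun h =>
    hp0 (by rw [← LinearMap.id_comp p, ← hjp', LinearMap.comp_assoc, h, LinearMap.comp_zero])
  refine exists_twisted_linearEquiv_of_mem_restrictedRepHoms hab hτ hτ' (F := j ∘ₗ p) ?_ hjp0
  intro n u
  rw [LinearMap.comp_apply, LinearMap.comp_apply, hp n u, hj]
end
end
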